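/- For α ∈ (0,2), let q_α(x) = exp(−|x|^α) and for a positive integer k let q_{α,k} be the k-fold convolution of q_α with itself (q_{α,1} = q_α, q_{α,k} = q_{α,k−1} ⋆ q_α). Then q_{α,k} is (k−1) times differentiable, its (k−1)-th derivative q_{α,k}^{(k−1)} is absolutely continuous with almost-everywhere derivative q_{α,k}^{(k)}; moreover, if α ∈ (0,1) then q_{α,k}^{(k−1)} is bounded, and if α ∈ [1,2) then q_{α,k}^{(k)} is bounded. -/

import Mathlib

/-!
Write `g = q_α`: it is bounded, integrable, and the primitive of its integrable a.e. derivative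
`g'`, which is bounded when `α ≥ 1`. By Fubini, if `F` is a bounded primitive of an integrable `u`,
then `g ⋆ F` is a bounded primitive of `g ⋆ u`; when `u` is itself such a primitive, `g ⋆ u` is
continuous, so `g ⋆ F` is differentiable. Iterating from `g`, `q_{α,k}` is `k - 1` times
differentiable and `q_{α,k}^{(k-1)}` is a bounded primitive of a function of the form `g'` or
`u ⋆ g'` with `u` integrable, which is bounded whenever `g'` is. Lebesgue's differentiation
theorem makes this density an a.e. derivative.
-/

open MeasureTheory Filter Set

noncomputable section

def qa (α : ℝ) (x : ℝ) : ℝ := Real.exp (-|x| ^ α)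

/-- `qak α k = q_{α,k+1}`, the `(k+1)`-fold convolution of `q_α` with itself. -/
def qak (α : ℝ) : ℕ → ℝ → ℝ
  | 0 => qa α
  | (k + 1) => fun x => ∫ t : ℝ, qak α k (x - t) * qa α t

local notation:67 f " ⋆ " g:66 => convolution f g (ContinuousLinearMap.mul ℝ ℝ) volume

def IsPrimitive (F u : ℝ → ℝ) : Prop := ∀ a b, F b - F a = ∫ t in a..b, u t

namespace IsPrimitive

variable {F u : ℝ → ℝ}

theorem eq_add_integral (h : IsPrimitive F u) : F = fun x => F 0 + ∫ t in (0 : ℝ)..x, u t := by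
  funext x
  rw [← h 0 x]
  ring

theorem continuous (h : IsPrimitive F u) (hu : LocallyIntegrable u) : Continuous F := by
  rw [h.eq_add_integral]
  refine continuous_const.add (intervalIntegral.continuous_primitive (fun a b => ?_) 0)
  exact intervalIntegrable_iff.mpr ((hu.integrableOn_isCompact isCompact_uIcc).mono_set
    uIoc_subset_uIcc)

theorem hasDerivAt (h : IsPrimitive F u) (hu : Continuous u) (x : ℝ) : HasDerivAt F (u x) x := by
  rw [h.eq_add_integral]
  exact ((hu.integral_hasStrictDerivAt 0 x).hasDerivAt).const_add _

theorem ae_hasDerivAt (h : IsPrimitive F u) (hu : LocallyIntegrable u) :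
    ∀ᵐ x, HasDerivAt F (u x) x := by
  rw [h.eq_add_integral]
  filter_upwards [_root_.LocallyIntegrable.ae_hasDerivAt_integral hu] with x hx
  exact (hx 0).const_add _

end IsPrimitive

section Convolution

variable {f g r : ℝ → ℝ}

theorem convolution_mul_comm : (f ⋆ g) = g ⋆ f := by
  simpa using (convolution_flip (L := ContinuousLinearMap.mul ℝ ℝ) (f := f) (g := g)
    (μ := volume)).symm

theorem abs_convolution_le (hf : Integrable f) {C : ℝ} (hg : ∀ x, |g x| ≤ C) (x : ℝ) :
    |(f ⋆ g) x| ≤ C * ∫ t, |f t| := by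
  rw [convolution_def, ← Real.norm_eq_abs]
  refine (norm_integral_le_of_norm_le (hf.abs.const_mul C)
    (Eventually.of_forall fun t => ?_)).trans_eq (integral_const_mul C _)
  simp only [ContinuousLinearMap.mul_apply', norm_mul, Real.norm_eq_abs]
  rw [mul_comm C]
  exact mul_le_mul_of_nonneg_left (hg _) (abs_nonneg _)

theorem IsPrimitive.convolution (hgr : IsPrimitive g r) {C : ℝ} (hg : ∀ x, |g x| ≤ C)
    (hr : Integrable r) (hf : Integrable f) : IsPrimitive (f ⋆ g) (f ⋆ r) := by
  have hgm : AEStronglyMeasurable g volume :=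
    (hgr.continuous hr.locallyIntegrable).aestronglyMeasurable
  have hint (x : ℝ) : Integrable fun t => f t * g (x - t) :=
    hf.mul_bdd (hgm.comp_measurePreserving (Measure.measurePreserving_sub_left volume x))
      (Eventually.of_forall fun t => hg (x - t))
  intro a b
  have hprod : Integrable (Function.uncurry fun s t => f t * r (s - t))
      ((volume.restrict (uIoc a b)).prod volume) :=
    (hf.convolution_integrand (ContinuousLinearMap.mul ℝ ℝ) hr).mono_measure
      (Measure.prod_mono Measure.restrict_le_self le_rfl)
  calc (f ⋆ g) b - (f ⋆ g) a = ∫ t, f t * (g (b - t) - g (a - t)) := by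
        simp only [convolution_def, ContinuousLinearMap.mul_apply',
          ← integral_sub (hint b) (hint a), mul_sub]
    _ = ∫ t, ∫ s in a..b, f t * r (s - t) := by
        congr 1
        funext t
        rw [hgr, intervalIntegral.integral_const_mul, intervalIntegral.integral_comp_sub_right]
    _ = ∫ s in a..b, (f ⋆ r) s := by
        rw [← intervalIntegral_integral_swap hprod]
        simp only [convolution_def, ContinuousLinearMap.mul_apply']

end Convolution

def IsBddIteratedPrimitive (P : (ℝ → ℝ) → Prop) : ℕ → (ℝ → ℝ) → Prop
  | 0 => P
  | n + 1 => fun F => (∃ C, ∀ x, |F x| ≤ C) ∧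
      ∃ u, Integrable u ∧ IsBddIteratedPrimitive P n u ∧ IsPrimitive F u

namespace IsBddIteratedPrimitive

variable {P : (ℝ → ℝ) → Prop} {n : ℕ} {F : ℝ → ℝ}

theorem continuous (h : IsBddIteratedPrimitive P (n + 1) F) : Continuous F :=
  let ⟨_, _, hu, _, hF⟩ := h
  hF.continuous hu.locallyIntegrable

theorem exists_hasDerivAt (h : IsBddIteratedPrimitive P (n + 2) F) :
    ∃ u, IsBddIteratedPrimitive P (n + 1) u ∧ ∀ x, HasDerivAt F (u x) x :=
  let ⟨_, u, _, hu, hF⟩ := h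
  ⟨u, hu, hF.hasDerivAt hu.continuous⟩

theorem differentiable (h : IsBddIteratedPrimitive P (n + 2) F) : Differentiable ℝ F :=
  let ⟨_, _, hF'⟩ := h.exists_hasDerivAt
  fun x => (hF' x).differentiableAt

theorem deriv (h : IsBddIteratedPrimitive P (n + 2) F) :
    IsBddIteratedPrimitive P (n + 1) (deriv F) := by
  obtain ⟨u, hu, hF'⟩ := h.exists_hasDerivAt
  rwa [show _root_.deriv F = u from funext fun x => (hF' x).deriv]

theorem contDiff (h : IsBddIteratedPrimitive P (n + 1) F) : ContDiff ℝ n F := by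
  induction n generalizing F with
  | zero => exact contDiff_zero.mpr h.continuous
  | succ n ih =>
    rw [Nat.cast_succ, contDiff_succ_iff_deriv]
    exact ⟨h.differentiable, by simp, ih h.deriv⟩

theorem iteratedDeriv (h : IsBddIteratedPrimitive P (n + 1) F) :
    IsBddIteratedPrimitive P 1 (iteratedDeriv n F) := by
  induction n generalizing F with
  | zero => simpa using h
  | succ n ih => simpa [iteratedDeriv_succ'] using ih h.deriv

theorem convolution {g r : ℝ → ℝ} (hg : Integrable g) {C : ℝ} (hgC : ∀ x, |g x| ≤ C)
    (hr : Integrable r) (hgr : IsPrimitive g r) (hP : ∀ u, Integrable u → P (u ⋆ r))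
    (h : IsBddIteratedPrimitive P (n + 1) F) : IsBddIteratedPrimitive P (n + 2) (g ⋆ F) := by
  induction n generalizing F with
  | zero =>
    obtain ⟨⟨D, hFD⟩, u, hu, hPu, hF⟩ := h
    refine ⟨⟨D * ∫ t, |g t|, abs_convolution_le hg hFD⟩, g ⋆ u, hg.integrable_convolution _ hu,
      ?_, hF.convolution hFD hu hg⟩
    -- `u` is merely integrable, so `g ⋆ u` is differentiated through `g`.
    rw [convolution_mul_comm]
    exact ⟨⟨C * ∫ t, |u t|, abs_convolution_le hu hgC⟩, u ⋆ r, hu.integrable_convolution _ hr,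
      hP u hu, hgr.convolution hgC hr hu⟩
  | succ n ih =>
    obtain ⟨⟨D, hFD⟩, u, hu, hu', hF⟩ := h
    exact ⟨⟨D * ∫ t, |g t|, abs_convolution_le hg hFD⟩, g ⋆ u, hg.integrable_convolution _ hu,
      ih hu', hF.convolution hFD hu hg⟩

end IsBddIteratedPrimitive

theorem integrable_comp_abs {f : ℝ → ℝ} (hf : IntegrableOn f (Ioi 0)) :
    Integrable fun x => f |x| := by
  have hIoi : IntegrableOn (fun x => f |x|) (Ioi 0) :=
    hf.congr_fun (fun x hx => by rw [abs_of_pos hx]) measurableSet_Ioi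
  have hIic : IntegrableOn (fun x => f |x|) (Iic 0) := by
    have hneg : MeasurableEmbedding fun x : ℝ => -x := (Homeomorph.neg ℝ).measurableEmbedding
    rw [← Measure.map_neg_eq_self (volume : Measure ℝ), hneg.integrableOn_map_iff]
    simp_rw [Function.comp_def, abs_neg, neg_preimage, neg_Iic, neg_zero]
    exact Iff.mpr integrableOn_Ici_iff_integrableOn_Ioi hIoi
  rw [← integrableOn_univ, ← Iic_union_Ioi (a := (0 : ℝ))]
  exact hIic.union hIoi

section Kernel

variable {α : ℝ}

theorem abs_qa_le_one (x : ℝ) : |qa α x| ≤ 1 := by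
  rw [qa, Real.abs_exp, Real.exp_le_one_iff, neg_nonpos]
  exact Real.rpow_nonneg (abs_nonneg x) α

theorem continuous_qa (hα : 0 < α) : Continuous (qa α) :=
  Real.continuous_exp.comp (continuous_abs.rpow_const fun _ => Or.inr hα.le).neg

theorem integrable_qa (hα : 0 < α) : Integrable (qa α) := by
  have h := integrableOn_rpow_mul_exp_neg_rpow (s := 0) (by norm_num) hα
  simp only [Real.rpow_zero, one_mul] at h
  exact integrable_comp_abs h

theorem hasDerivAt_qa {x : ℝ} (hx : x ≠ 0) :
    HasDerivAt (qa α) (qa α x * -(SignType.sign x * α * |x| ^ (α - 1))) x :=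
  ((hasDerivAt_abs hx).rpow_const (Or.inl (abs_ne_zero.mpr hx))).neg.exp

theorem deriv_qa_zero : deriv (qa α) 0 = 0 := by
  have h := deriv_comp_neg (qa α) 0
  have heven : (fun x => qa α (-x)) = qa α := funext fun x => by rw [qa, qa, abs_neg]
  rw [heven, neg_zero] at h
  linarith

theorem abs_deriv_qa_le (x : ℝ) : |deriv (qa α) x| ≤ |α| * (|x| ^ (α - 1) * qa α x) := by
  rcases eq_or_ne x 0 with rfl | hx
  · rw [deriv_qa_zero, abs_zero]
    exact mul_nonneg (abs_nonneg α) (mul_nonneg (Real.rpow_nonneg le_rfl _) (Real.exp_pos _).le)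
  · rw [(hasDerivAt_qa hx).deriv]
    have hsign : |(SignType.sign x : ℝ)| = 1 := by rcases hx.lt_or_gt with h | h <;> simp [h]
    rw [abs_mul, abs_neg, abs_mul, abs_mul, hsign,
      abs_of_pos (show 0 < qa α x from Real.exp_pos _),
      abs_of_nonneg (Real.rpow_nonneg (abs_nonneg x) _)]
    exact le_of_eq (by ring)

theorem integrable_deriv_qa (hα : 0 < α) : Integrable (deriv (qa α)) := by
  have h := integrableOn_rpow_mul_exp_neg_rpow (by linarith : -1 < α - 1) hα
  exact ((integrable_comp_abs h).const_mul |α|).mono' (measurable_deriv _).aestronglyMeasurable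
    (Eventually.of_forall abs_deriv_qa_le)

theorem abs_deriv_qa_le_of_one_le (hα : 1 ≤ α) (x : ℝ) : |deriv (qa α) x| ≤ α := by
  set y := |x|
  have hpow : y ^ (α - 1) ≤ 1 + y ^ α := by
    rcases le_total y 1 with h | h
    · linarith [Real.rpow_le_one (abs_nonneg x) h (by linarith : 0 ≤ α - 1),
        Real.rpow_nonneg (abs_nonneg x) α]
    · linarith [Real.rpow_le_rpow_of_exponent_le h (by linarith : α - 1 ≤ α)]
  have hexp : (1 + y ^ α) * qa α x ≤ 1 :=
    calc (1 + y ^ α) * Real.exp (-y ^ α) ≤ Real.exp (y ^ α) * Real.exp (-y ^ α) :=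
          mul_le_mul_of_nonneg_right (by linarith [Real.add_one_le_exp (y ^ α)])
            (Real.exp_pos _).le
      _ = 1 := by rw [← Real.exp_add, add_neg_cancel, Real.exp_zero]
  have hqa : 0 ≤ qa α x := (Real.exp_pos _).le
  calc |deriv (qa α) x| ≤ |α| * (y ^ (α - 1) * qa α x) := abs_deriv_qa_le x
    _ ≤ α * ((1 + y ^ α) * qa α x) := by
        rw [abs_of_nonneg (by linarith : (0 : ℝ) ≤ α)]
        gcongr
    _ ≤ α := by nlinarith

theorem isPrimitive_qa (hα : 0 < α) : IsPrimitive (qa α) (deriv (qa α)) := fun _ _ =>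
  (integral_eq_of_hasDerivAt_off_countable _ _ (countable_singleton 0)
    (continuous_qa hα).continuousOn
    (fun _ hx => (hasDerivAt_qa hx.2).differentiableAt.hasDerivAt)
    (integrable_deriv_qa hα).intervalIntegrable).symm

theorem qak_succ (m : ℕ) : qak α (m + 1) = qa α ⋆ qak α m := by
  rw [convolution_mul_comm]
  funext x
  exact convolution_mul_swap.symm

theorem isBddIteratedPrimitive_qak (hα : 0 < α) (m : ℕ) :
    IsBddIteratedPrimitive (fun u => 1 ≤ α → ∃ C, ∀ x, |u x| ≤ C) (m + 1) (qak α m) := by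
  induction m with
  | zero =>
    exact ⟨⟨1, abs_qa_le_one⟩, deriv (qa α), integrable_deriv_qa hα,
      fun h => ⟨α, abs_deriv_qa_le_of_one_le h⟩, isPrimitive_qa hα⟩
  | succ m ih =>
    rw [qak_succ]
    exact ih.convolution (integrable_qa hα) abs_qa_le_one (integrable_deriv_qa hα)
      (isPrimitive_qa hα) fun u hu h => ⟨α * ∫ t, |u t|, abs_convolution_le hu
        (abs_deriv_qa_le_of_one_le h)⟩

end Kernel

theorem qak_smoothness_general (α : ℝ) (hα : α ∈ Set.Ioo (0 : ℝ) 2) (k : ℕ) :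
    ContDiff ℝ (k - 1 : ℕ) (qak α (k - 1)) ∧
    ∃ D : ℝ → ℝ,
      (∀ᵐ x ∂(volume : Measure ℝ),
        HasDerivAt (iteratedDeriv (k - 1) (qak α (k - 1))) (D x) x) ∧
      (∀ a b : ℝ,
        iteratedDeriv (k - 1) (qak α (k - 1)) b
          - iteratedDeriv (k - 1) (qak α (k - 1)) a = ∫ t in a..b, D t) ∧
      (α < 1 → ∃ C : ℝ, ∀ x : ℝ, |iteratedDeriv (k - 1) (qak α (k - 1)) x| ≤ C) ∧
      (1 ≤ α → ∃ C : ℝ, ∀ x : ℝ, |D x| ≤ C) := by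
  have hreg := isBddIteratedPrimitive_qak hα.1 (k - 1)
  obtain ⟨hbdd, D, hD, hDbdd, hprim⟩ := hreg.iteratedDeriv
  exact ⟨hreg.contDiff, D, hprim.ae_hasDerivAt hD.locallyIntegrable, hprim, fun _ => hbdd, hDbdd⟩

/-- Lemma 3.3(1): `q_{α,k}` is `k-1` times differentiable, its `(k-1)`-th derivative is
absolutely continuous with almost-everywhere derivative `q_{α,k}^{(k)}`; moreover, if
`α ∈ (0,1)` then `q_{α,k}^{(k-1)}` is bounded, and if `α ∈ [1,2)` then `q_{α,k}^{(k)}`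
is bounded.  (Here `qak α (k-1) = q_{α,k}`.) -/
theorem qak_smoothness (α : ℝ) (hα : α ∈ Set.Ioo (0 : ℝ) 2) (k : ℕ) (hk : 1 ≤ k) :
    ContDiff ℝ (k - 1 : ℕ) (qak α (k - 1)) ∧
    ∃ D : ℝ → ℝ,
      (∀ᵐ x ∂(volume : Measure ℝ),
        HasDerivAt (iteratedDeriv (k - 1) (qak α (k - 1))) (D x) x) ∧
      (∀ a b : ℝ,
        iteratedDeriv (k - 1) (qak α (k - 1)) b
          - iteratedDeriv (k - 1) (qak α (k - 1)) a = ∫ t in a..b, D t) ∧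
      (α < 1 → ∃ C : ℝ, ∀ x : ℝ, |iteratedDeriv (k - 1) (qak α (k - 1)) x| ≤ C) ∧
      (1 ≤ α → ∃ C : ℝ, ∀ x : ℝ, |D x| ≤ C) :=
  qak_smoothness_general α hα k

end
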